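/- arXiv:math/9207208 — 4 statements merged into one kernel-verified Lean document; each statement's English description precedes it below -/
import Mathlib

section
/- Let X be a uniformly convex Banach function lattice on a probability space as above, and let h₁, h₂ ∈ S(L₁(μ))⁺ ∩ L_∞(μ) with ‖h₁ - h₂‖₁ ≤ 1. If x₁, x₂ are the respective entropy maximizers (xᵢ ∈ S(X)⁺ maximizing ∫ hᵢ log|g| dμ over the unit ball), then ‖(x₁ + x₂)/2‖_X ≥ 1 - ‖h₁ - h₂‖₁^(1/2). -/
/-!
Put `m = (x₁ + x₂) / 2` and `t = N m`, so that `t⁻¹ • m` is admissible. Pointwise, concavity of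
`log` gives `h₁ log x₁ + h₂ log x₂ ≤ (h₁ + h₂) log m + log 2 · |h₁ - h₂|`; the support hypotheses
make this hold also where some `xᵢ` vanishes, despite `Real.log 0 = 0`. Integrating, and comparing
with maximality `E(hᵢ, t⁻¹ • m) ≤ E(hᵢ, xᵢ)`, gives `0 ≤ 2 log t + log 2 · ‖h₁ - h₂‖₁`, hence
`t ≥ 1 + log t ≥ 1 - ‖h₁ - h₂‖₁ ≥ 1 - ‖h₁ - h₂‖₁ ^ (1/2)`.

All entropies involved are finite: `h log |u| ≤ C |u|` when `0 ≤ h ≤ C`, the constant `1/2` is a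
competitor of finite entropy, and `xᵢ ≤ 2t · (t⁻¹ • m)` bounds `hᵢ log (t⁻¹ • m)` from below.
-/

open MeasureTheory Filter ENNReal

/-- The entropy `E(h,u) = ∫ h log|u| dμ`, valued in the extended reals
(positive part minus negative part, with the convention `0·log 0 = 0`). -/
noncomputable def entropy {Ω : Type*} [MeasurableSpace Ω] (μ : Measure Ω)
    (h u : Ω → ℝ) : EReal :=
  ((∫⁻ ω, ENNReal.ofReal (h ω * Real.log |u ω|) ∂μ : ℝ≥0∞) : EReal) -
  ((∫⁻ ω, ENNReal.ofReal (-(h ω * Real.log |u ω|)) ∂μ : ℝ≥0∞) : EReal)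

theorem mul_log_le_mul {a C z : ℝ} (ha : 0 ≤ a) (haC : a ≤ C) (hz : 0 ≤ z) :
    a * Real.log z ≤ C * z :=
  calc a * Real.log z ≤ a * z := mul_le_mul_of_nonneg_left (Real.log_le_self hz) ha
    _ ≤ C * z := mul_le_mul_of_nonneg_right haC hz

theorem log_add_log_le_two_mul_log_midpoint {x y : ℝ} (hx : 0 < x) (hy : 0 < y) :
    Real.log x + Real.log y ≤ 2 * Real.log ((x + y) / 2) := by
  rw [← Real.log_mul hx.ne' hy.ne', ← Real.log_rpow (by positivity)]
  exact Real.log_le_log (by positivity) (by norm_num; nlinarith [sq_nonneg (x - y)])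

theorem log_le_log_midpoint_add_log_two {x y : ℝ} (hx : 0 < x) (hy : 0 ≤ y) :
    Real.log x ≤ Real.log ((x + y) / 2) + Real.log 2 := by
  rw [← Real.log_mul (by positivity) two_ne_zero, div_mul_cancel₀ _ two_ne_zero]
  exact Real.log_le_log hx (by linarith)

theorem mul_log_add_mul_log_le {a b x y : ℝ} (ha : 0 ≤ a) (hb : 0 ≤ b) (hx : 0 ≤ x) (hy : 0 ≤ y)
    (hax : a ≠ 0 → x ≠ 0) (hby : b ≠ 0 → y ≠ 0) :
    a * Real.log x + b * Real.log y ≤ (a + b) * Real.log ((x + y) / 2) + Real.log 2 * |a - b| := by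
  wlog hba : b ≤ a generalizing a b x y
  · have := this hb ha hy hx hby hax (le_of_not_ge hba)
    rwa [add_comm y, add_comm b, abs_sub_comm, add_comm (b * Real.log y)] at this
  have hboth : b * (Real.log x + Real.log y) ≤ b * (2 * Real.log ((x + y) / 2)) := by
    rcases hb.eq_or_lt with rfl | hb
    · simp
    have hx : 0 < x := hx.lt_of_ne' (hax (hb.trans_le hba).ne')
    exact mul_le_mul_of_nonneg_left
      (log_add_log_le_two_mul_log_midpoint hx (hy.lt_of_ne' (hby hb.ne'))) hb.le
  have hfirst : (a - b) * Real.log x ≤ (a - b) * (Real.log ((x + y) / 2) + Real.log 2) := by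
    rcases (sub_nonneg.2 hba).eq_or_lt with hab | hab
    · simp [← hab]
    have hx : 0 < x := hx.lt_of_ne' (hax (hb.trans_lt (sub_pos.1 hab)).ne')
    exact mul_le_mul_of_nonneg_left (log_le_log_midpoint_add_log_two hx hy) hab.le
  rw [abs_of_nonneg (sub_nonneg.2 hba)]
  linarith

theorem mul_log_inv_mul {a t x : ℝ} (ht : t ≠ 0) (hax : a ≠ 0 → x ≠ 0) :
    a * Real.log (t⁻¹ * x) = a * Real.log x - a * Real.log t := by
  rcases eq_or_ne a 0 with rfl | ha
  · simp
  rw [Real.log_mul (inv_ne_zero ht) (hax ha), Real.log_inv]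
  ring

theorem one_sub_rpow_half_le {δ t : ℝ} (hδ0 : 0 ≤ δ) (hδ1 : δ ≤ 1) (ht : 0 < t)
    (h : 0 ≤ 2 * Real.log t + Real.log 2 * δ) : 1 - δ ^ (1 / 2 : ℝ) ≤ t := by
  have hlog2 : Real.log 2 ≤ 1 := by linarith [Real.log_two_lt_d9]
  have hδ : δ ≤ δ ^ (1 / 2 : ℝ) := Real.self_le_rpow_of_le_one hδ0 hδ1 (by norm_num)
  nlinarith [Real.log_le_sub_one_of_pos ht, mul_le_mul_of_nonneg_right hlog2 hδ0]

section Entropy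

variable {Ω : Type*} [MeasurableSpace Ω] {μ : Measure Ω} {h u : Ω → ℝ}

theorem entropy_eq_integral (hu : Integrable (fun ω => h ω * Real.log |u ω|) μ) :
    entropy μ h u = ((∫ ω, h ω * Real.log |u ω| ∂μ : ℝ) : EReal) := by
  rw [entropy, integral_eq_lintegral_pos_part_sub_lintegral_neg_part hu, EReal.coe_sub,
    EReal.coe_ennreal_toReal hu.lintegral_lt_top.ne, EReal.coe_ennreal_toReal
      (Integrable.lintegral_lt_top (f := fun ω => -(h ω * Real.log |u ω|)) hu.neg).ne]

theorem entropy_const (hh : Integrable h μ) (c : ℝ) :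
    entropy μ h (fun _ => c) = (((∫ ω, h ω ∂μ) * Real.log |c| : ℝ) : EReal) := by
  rw [entropy_eq_integral (hh.mul_const _), integral_mul_const]

theorem integrable_mul_log_of_entropy_ne_bot {C : ℝ} (hh : AEMeasurable h μ) (hh0 : ∀ ω, 0 ≤ h ω)
    (hC : ∀ᵐ ω ∂μ, h ω ≤ C) (hu : Integrable u μ) (hE : entropy μ h u ≠ ⊥) :
    Integrable (fun ω => h ω * Real.log |u ω|) μ := by
  have hmeas : AEStronglyMeasurable (fun ω => h ω * Real.log |u ω|) μ :=
    (hh.mul (Real.measurable_log.comp_aemeasurable hu.aemeasurable.abs)).aestronglyMeasurable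
  have hpos : Integrable (fun ω => max (h ω * Real.log |u ω|) 0) μ := by
    refine integrable_of_le_of_le
      (hmeas.aemeasurable.max aemeasurable_const).aestronglyMeasurable
      (ae_of_all _ fun ω => le_max_right _ 0) ?_ (integrable_zero _ _ μ) (hu.abs.const_mul C)
    filter_upwards [hC] with ω hω
    exact max_le (mul_log_le_mul (hh0 ω) hω (abs_nonneg _))
      (mul_nonneg ((hh0 ω).trans hω) (abs_nonneg _))
  have hneg : Integrable (fun ω => max (-(h ω * Real.log |u ω|)) 0) μ := by
    refine (lintegral_ofReal_ne_top_iff_integrable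
      (hmeas.neg.aemeasurable.max aemeasurable_const).aestronglyMeasurable
      (ae_of_all _ fun ω => le_max_right _ 0)).1 fun htop => hE ?_
    simp only [Pi.neg_apply, ENNReal.ofReal_max, ENNReal.ofReal_zero, max_zero] at htop
    rw [entropy, htop, EReal.coe_ennreal_top, EReal.sub_top]
  exact (hpos.sub hneg).congr (ae_of_all _ fun ω => max_zero_sub_max_neg_zero_eq_self _)

theorem integrable_mul_log_of_abs_le_mul {x g : Ω → ℝ} {c C : ℝ} (hh : Integrable h μ)
    (hh0 : ∀ ω, 0 ≤ h ω) (hC : ∀ᵐ ω ∂μ, h ω ≤ C) (hg : Integrable g μ)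
    (hx : Integrable (fun ω => h ω * Real.log |x ω|) μ) (hc : 0 < c)
    (hsupp : ∀ᵐ ω ∂μ, h ω ≠ 0 → x ω ≠ 0) (hxg : ∀ ω, |x ω| ≤ c * |g ω|) :
    Integrable (fun ω => h ω * Real.log |g ω|) μ := by
  have hmeas : AEMeasurable (fun ω => h ω * Real.log |g ω|) μ :=
    hh.aemeasurable.mul (Real.measurable_log.comp_aemeasurable hg.aemeasurable.abs)
  refine integrable_of_le_of_le hmeas.aestronglyMeasurable ?_ ?_
    (hx.sub (hh.mul_const (Real.log c))) (hg.abs.const_mul C)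
  · filter_upwards [hsupp] with ω hω
    rcases eq_or_ne (h ω) 0 with h0 | h0
    · simp [h0]
    have hx0 : 0 < |x ω| := abs_pos.2 (hω h0)
    have hg0 : |g ω| ≠ 0 := fun hg0 => by linarith [hxg ω, hg0 ▸ mul_zero c]
    have hlog : Real.log |x ω| ≤ Real.log c + Real.log |g ω| := by
      rw [← Real.log_mul hc.ne' hg0]
      exact Real.log_le_log hx0 (hxg ω)
    simp only [Pi.sub_apply]
    nlinarith [mul_le_mul_of_nonneg_left hlog (hh0 ω)]
  · filter_upwards [hC] with ω hω
    exact mul_log_le_mul (hh0 ω) hω (abs_nonneg _)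

theorem integral_mul_log_add_le {h₁ h₂ x₁ x₂ g : Ω → ℝ} {t : ℝ} (ht : 0 < t)
    (hgx : ∀ ω, g ω = t⁻¹ * ((x₁ ω + x₂ ω) / 2))
    (h₁0 : ∀ ω, 0 ≤ h₁ ω) (h₂0 : ∀ ω, 0 ≤ h₂ ω) (hx₁0 : ∀ ω, 0 ≤ x₁ ω) (hx₂0 : ∀ ω, 0 ≤ x₂ ω)
    (hx₁ : ∀ᵐ ω ∂μ, h₁ ω ≠ 0 → x₁ ω ≠ 0) (hx₂ : ∀ᵐ ω ∂μ, h₂ ω ≠ 0 → x₂ ω ≠ 0)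
    (h₁i : Integrable h₁ μ) (h₂i : Integrable h₂ μ)
    (hF₁ : Integrable (fun ω => h₁ ω * Real.log |x₁ ω|) μ)
    (hF₂ : Integrable (fun ω => h₂ ω * Real.log |x₂ ω|) μ)
    (hG₁ : Integrable (fun ω => h₁ ω * Real.log |g ω|) μ)
    (hG₂ : Integrable (fun ω => h₂ ω * Real.log |g ω|) μ) :
    ∫ ω, h₁ ω * Real.log |x₁ ω| ∂μ + ∫ ω, h₂ ω * Real.log |x₂ ω| ∂μ ≤
      ∫ ω, h₁ ω * Real.log |g ω| ∂μ + ∫ ω, h₂ ω * Real.log |g ω| ∂μ +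
        ((∫ ω, h₁ ω ∂μ + ∫ ω, h₂ ω ∂μ) * Real.log t + Real.log 2 * ∫ ω, |h₁ ω - h₂ ω| ∂μ) := by
  have hpt : ∀ᵐ ω ∂μ, h₁ ω * Real.log |x₁ ω| + h₂ ω * Real.log |x₂ ω| ≤
      h₁ ω * Real.log |g ω| + h₂ ω * Real.log |g ω| +
        ((h₁ ω + h₂ ω) * Real.log t + Real.log 2 * |h₁ ω - h₂ ω|) := by
    filter_upwards [hx₁, hx₂] with ω hω₁ hω₂
    have hm₁ : h₁ ω ≠ 0 → (x₁ ω + x₂ ω) / 2 ≠ 0 := fun hne => by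
      have := (hx₁0 ω).lt_of_ne' (hω₁ hne); linarith [hx₂0 ω]
    have hm₂ : h₂ ω ≠ 0 → (x₁ ω + x₂ ω) / 2 ≠ 0 := fun hne => by
      have := (hx₂0 ω).lt_of_ne' (hω₂ hne); linarith [hx₁0 ω]
    rw [abs_of_nonneg (hx₁0 ω), abs_of_nonneg (hx₂0 ω), hgx ω,
      abs_of_nonneg (by have := hx₁0 ω; have := hx₂0 ω; positivity),
      mul_log_inv_mul ht.ne' hm₁, mul_log_inv_mul ht.ne' hm₂]
    linarith [mul_log_add_mul_log_le (h₁0 ω) (h₂0 ω) (hx₁0 ω) (hx₂0 ω) hω₁ hω₂]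
  have hK : ∫ ω, (h₁ ω + h₂ ω) * Real.log t + Real.log 2 * |h₁ ω - h₂ ω| ∂μ =
      (∫ ω, h₁ ω ∂μ + ∫ ω, h₂ ω ∂μ) * Real.log t + Real.log 2 * ∫ ω, |h₁ ω - h₂ ω| ∂μ := by
    rw [integral_add (by fun_prop) (by fun_prop), integral_mul_const, integral_const_mul,
      integral_add h₁i h₂i]
  have := integral_mono_ae (hF₁.add hF₂) ((hG₁.add hG₂).add (by fun_prop)) hpt
  simp only [Pi.add_apply] at this
  rw [integral_add hF₁ hF₂, integral_add, integral_add hG₁ hG₂, hK] at this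
  exacts [this, hG₁.add hG₂, by fun_prop]

/-- With `P g := N g ≤ 1` this is the maximality part of `x = F_X(h)`; `P x` is not included. -/
def AttainsEntropySup (μ : Measure Ω) (P : (Ω → ℝ) → Prop) (h x : Ω → ℝ) : Prop :=
  entropy μ h x = sSup {e | ∃ g, P g ∧ e = entropy μ h g}

namespace AttainsEntropySup

variable {P : (Ω → ℝ) → Prop} {x g : Ω → ℝ}

theorem entropy_le (hmax : AttainsEntropySup μ P h x) (hg : P g) :
    entropy μ h g ≤ entropy μ h x :=
  hmax ▸ le_sSup ⟨g, hg, rfl⟩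

theorem integrable_mul_log {c C : ℝ} (hmax : AttainsEntropySup μ P h x) (hc : P fun _ => c)
    (hh : Integrable h μ) (hh0 : ∀ ω, 0 ≤ h ω) (hC : ∀ᵐ ω ∂μ, h ω ≤ C)
    (hx : Integrable x μ) :
    Integrable (fun ω => h ω * Real.log |x ω|) μ :=
  integrable_mul_log_of_entropy_ne_bot hh.aemeasurable hh0 hC hx <|
    ne_bot_of_le_ne_bot (entropy_const hh c ▸ EReal.coe_ne_bot _) (hmax.entropy_le hc)

theorem integral_mul_log_le (hmax : AttainsEntropySup μ P h x) (hg : P g)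
    (hx : Integrable (fun ω => h ω * Real.log |x ω|) μ)
    (hgi : Integrable (fun ω => h ω * Real.log |g ω|) μ) :
    ∫ ω, h ω * Real.log |g ω| ∂μ ≤ ∫ ω, h ω * Real.log |x ω| ∂μ := by
  have := hmax.entropy_le hg
  rwa [entropy_eq_integral hgi, entropy_eq_integral hx, EReal.coe_le_coe_iff] at this

theorem midpoint_scale_bound {h₁ h₂ x₁ x₂ : Ω → ℝ} {c t : ℝ}
    (hmax₁ : AttainsEntropySup μ P h₁ x₁) (hmax₂ : AttainsEntropySup μ P h₂ x₂)
    (hc : P fun _ => c) (hg : P g) (ht : 0 < t) (hgx : ∀ ω, g ω = t⁻¹ * ((x₁ ω + x₂ ω) / 2))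
    (h₁0 : ∀ ω, 0 ≤ h₁ ω) (h₂0 : ∀ ω, 0 ≤ h₂ ω) (h₁i : Integrable h₁ μ) (h₂i : Integrable h₂ μ)
    (h₁bdd : ∃ C : ℝ, ∀ᵐ ω ∂μ, h₁ ω ≤ C) (h₂bdd : ∃ C : ℝ, ∀ᵐ ω ∂μ, h₂ ω ≤ C)
    (hx₁0 : ∀ ω, 0 ≤ x₁ ω) (hx₂0 : ∀ ω, 0 ≤ x₂ ω) (hx₁i : Integrable x₁ μ)
    (hx₂i : Integrable x₂ μ) (hgi : Integrable g μ)
    (hx₁ : ∀ᵐ ω ∂μ, h₁ ω ≠ 0 → x₁ ω ≠ 0) (hx₂ : ∀ᵐ ω ∂μ, h₂ ω ≠ 0 → x₂ ω ≠ 0) :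
    0 ≤ (∫ ω, h₁ ω ∂μ + ∫ ω, h₂ ω ∂μ) * Real.log t + Real.log 2 * ∫ ω, |h₁ ω - h₂ ω| ∂μ := by
  obtain ⟨C₁, hC₁⟩ := h₁bdd
  obtain ⟨C₂, hC₂⟩ := h₂bdd
  have hxg : ∀ ω, x₁ ω + x₂ ω = 2 * t * |g ω| := fun ω => by
    have := hx₁0 ω; have := hx₂0 ω
    rw [hgx, abs_of_nonneg (by positivity)]
    field_simp
  have hF₁ := hmax₁.integrable_mul_log hc h₁i h₁0 hC₁ hx₁i
  have hF₂ := hmax₂.integrable_mul_log hc h₂i h₂0 hC₂ hx₂i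
  have hG₁ := integrable_mul_log_of_abs_le_mul (c := 2 * t) h₁i h₁0 hC₁ hgi hF₁ (by positivity) hx₁
    fun ω => by linarith [abs_of_nonneg (hx₁0 ω), hxg ω, hx₂0 ω]
  have hG₂ := integrable_mul_log_of_abs_le_mul (c := 2 * t) h₂i h₂0 hC₂ hgi hF₂ (by positivity) hx₂
    fun ω => by linarith [abs_of_nonneg (hx₂0 ω), hxg ω, hx₁0 ω]
  linarith [integral_mul_log_add_le ht hgx h₁0 h₂0 hx₁0 hx₂0 hx₁ hx₂ h₁i h₂i hF₁ hF₂ hG₁ hG₂,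
    hmax₁.integral_mul_log_le hg hF₁ hG₁, hmax₂.integral_mul_log_le hg hF₂ hG₂]

end AttainsEntropySup

end Entropy

theorem div_two_le_midpoint {Ω : Type*} {N : (Ω → ℝ) → ℝ}
    (hsmul : ∀ (c : ℝ) (f : Ω → ℝ), N (c • f) = |c| * N f)
    (hmono : ∀ f g : Ω → ℝ, (∀ ω, |f ω| ≤ |g ω|) → N f ≤ N g) {x y : Ω → ℝ}
    (hx : ∀ ω, 0 ≤ x ω) (hy : ∀ ω, 0 ≤ y ω) :
    N x / 2 ≤ N (fun ω => (x ω + y ω) / 2) := by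
  calc N x / 2 = N ((1 / 2 : ℝ) • x) := by rw [hsmul]; norm_num; ring
    _ ≤ N (fun ω => (x ω + y ω) / 2) := hmono _ _ fun ω => by
      have := hx ω; have := hy ω
      exact abs_le_abs_of_nonneg (by simp only [Pi.smul_apply, smul_eq_mul]; positivity)
        (by simp only [Pi.smul_apply, smul_eq_mul]; linarith)

theorem entropy_maximizers_midpoint_general {Ω : Type*} [MeasurableSpace Ω]
    (μ : Measure Ω) (N : (Ω → ℝ) → ℝ)
    (hsmul : ∀ (c : ℝ) (f : Ω → ℝ), N (c • f) = |c| * N f)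
    (hmono : ∀ f g : Ω → ℝ, (∀ ω, |f ω| ≤ |g ω|) → N f ≤ N g)
    (hIntBall : ∀ f : Ω → ℝ, N f ≤ 1 → Integrable f μ)
    (hhalf : N (fun _ => 1 / 2) ≤ 1)
    -- `h₁, h₂ ∈ S(L₁(μ))⁺ ∩ L_∞(μ)`
    (h₁ h₂ : Ω → ℝ)
    (h₁0 : 0 ≤ h₁) (h₂0 : 0 ≤ h₂)
    (h₁int : Integrable h₁ μ) (h₂int : Integrable h₂ μ)
    (h₁bdd : ∃ C : ℝ, ∀ᵐ ω ∂μ, h₁ ω ≤ C) (h₂bdd : ∃ C : ℝ, ∀ᵐ ω ∂μ, h₂ ω ≤ C)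
    (h₁norm : ∫ ω, h₁ ω ∂μ = 1) (h₂norm : ∫ ω, h₂ ω ∂μ = 1)
    (hclose : ∫ ω, |h₁ ω - h₂ ω| ∂μ ≤ 1)
    -- `x₁, x₂` the respective entropy maximizers
    (x₁ x₂ : Ω → ℝ) (hx₁0 : 0 ≤ x₁) (hx₂0 : 0 ≤ x₂)
    (hx₁S : N x₁ = 1) (hx₂S : N x₂ = 1)
    (hx₁max : entropy μ h₁ x₁ =
      sSup {e : EReal | ∃ g : Ω → ℝ, N g ≤ 1 ∧ e = entropy μ h₁ g})
    (hx₂max : entropy μ h₂ x₂ =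
      sSup {e : EReal | ∃ g : Ω → ℝ, N g ≤ 1 ∧ e = entropy μ h₂ g})
    (hx₁supp : ∀ᵐ ω ∂μ, (x₁ ω ≠ 0 ↔ h₁ ω ≠ 0))
    (hx₂supp : ∀ᵐ ω ∂μ, (x₂ ω ≠ 0 ↔ h₂ ω ≠ 0)) :
    1 - (∫ ω, |h₁ ω - h₂ ω| ∂μ) ^ (1 / 2 : ℝ) ≤
      N (fun ω => (x₁ ω + x₂ ω) / 2) := by
  set t := N fun ω => (x₁ ω + x₂ ω) / 2
  have ht : 0 < t := by linarith [div_two_le_midpoint hsmul hmono hx₁0 hx₂0]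
  have hg : N (t⁻¹ • fun ω => (x₁ ω + x₂ ω) / 2) ≤ 1 := by
    rw [hsmul, abs_inv, abs_of_pos ht, inv_mul_cancel₀ ht.ne']
  have key := AttainsEntropySup.midpoint_scale_bound hx₁max hx₂max hhalf hg ht (fun _ => rfl)
    h₁0 h₂0 h₁int h₂int h₁bdd h₂bdd hx₁0 hx₂0 (hIntBall x₁ hx₁S.le) (hIntBall x₂ hx₂S.le)
    (hIntBall _ hg) (hx₁supp.mono fun _ h => h.2) (hx₂supp.mono fun _ h => h.2)
  rw [h₁norm, h₂norm] at key
  exact one_sub_rpow_half_le (integral_nonneg fun _ => abs_nonneg _) hclose ht (by linarith)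

/-- Let `X` (with norm `N`) be a uniformly convex Banach function lattice on a
probability space, `h₁, h₂ ∈ S(L₁(μ))⁺ ∩ L_∞(μ)` with `‖h₁ - h₂‖₁ ≤ 1`,
and `x₁, x₂ ∈ S(X)⁺` the respective entropy maximizers. Then
`‖(x₁ + x₂)/2‖_X ≥ 1 - ‖h₁ - h₂‖₁^(1/2)`. -/
theorem entropy_maximizers_midpoint {Ω : Type*} [MeasurableSpace Ω]
    (μ : Measure Ω) [IsProbabilityMeasure μ] (N : (Ω → ℝ) → ℝ)
    (hadd : ∀ f g : Ω → ℝ, N (f + g) ≤ N f + N g)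
    (hsmul : ∀ (c : ℝ) (f : Ω → ℝ), N (c • f) = |c| * N f)
    (hmono : ∀ f g : Ω → ℝ, (∀ ω, |f ω| ≤ |g ω|) → N f ≤ N g)
    (hIntBall : ∀ f : Ω → ℝ, N f ≤ 1 → Integrable f μ)
    (hL1 : ∀ f : Ω → ℝ, Integrable f μ → ∫ ω, |f ω| ∂μ ≤ N f)
    (hhalf : N (fun _ => 1 / 2) ≤ 1)
    (hUC : ∀ ε : ℝ, 0 < ε → ∃ δ : ℝ, 0 < δ ∧ ∀ f g : Ω → ℝ,
      N f = 1 → N g = 1 → ε ≤ N (f - g) →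
      N (fun ω => (f ω + g ω) / 2) ≤ 1 - δ)
    -- `h₁, h₂ ∈ S(L₁(μ))⁺ ∩ L_∞(μ)`
    (h₁ h₂ : Ω → ℝ) (h₁meas : Measurable h₁) (h₂meas : Measurable h₂)
    (h₁0 : 0 ≤ h₁) (h₂0 : 0 ≤ h₂)
    (h₁int : Integrable h₁ μ) (h₂int : Integrable h₂ μ)
    (h₁bdd : ∃ C : ℝ, ∀ᵐ ω ∂μ, h₁ ω ≤ C) (h₂bdd : ∃ C : ℝ, ∀ᵐ ω ∂μ, h₂ ω ≤ C)
    (h₁norm : ∫ ω, h₁ ω ∂μ = 1) (h₂norm : ∫ ω, h₂ ω ∂μ = 1)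
    (hclose : ∫ ω, |h₁ ω - h₂ ω| ∂μ ≤ 1)
    -- `x₁, x₂` the respective entropy maximizers
    (x₁ x₂ : Ω → ℝ) (hx₁0 : 0 ≤ x₁) (hx₂0 : 0 ≤ x₂)
    (hx₁S : N x₁ = 1) (hx₂S : N x₂ = 1)
    (hx₁max : entropy μ h₁ x₁ =
      sSup {e : EReal | ∃ g : Ω → ℝ, N g ≤ 1 ∧ e = entropy μ h₁ g})
    (hx₂max : entropy μ h₂ x₂ =
      sSup {e : EReal | ∃ g : Ω → ℝ, N g ≤ 1 ∧ e = entropy μ h₂ g})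
    (hx₁supp : ∀ᵐ ω ∂μ, (x₁ ω ≠ 0 ↔ h₁ ω ≠ 0))
    (hx₂supp : ∀ᵐ ω ∂μ, (x₂ ω ≠ 0 ↔ h₂ ω ≠ 0)) :
    1 - (∫ ω, |h₁ ω - h₂ ω| ∂μ) ^ (1 / 2 : ℝ) ≤
      N (fun ω => (x₁ ω + x₂ ω) / 2) :=
  entropy_maximizers_midpoint_general μ N hsmul hmono hIntBall hhalf h₁ h₂ h₁0 h₂0 h₁int h₂int h₁bdd
    h₂bdd h₁norm h₂norm hclose x₁ x₂ hx₁0 hx₂0 hx₁S hx₂S hx₁max hx₂max hx₁supp hx₂supp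
end

section
/- Let X be a Banach lattice of functions on a set Ω, 1 < p < ∞, and X^(p) its p-convexification with norm |||f||| = ‖|f|^p‖^(1/p). The map G_p : S(X^(p)) → S(X), G_p(f) = |f|^p · sign f, is a bijection, and for f, g ∈ S(X^(p)) with δ = |||f - g||| < 1, one has 2^(1-p) δ^p ≤ ‖G_p(f) - G_p(g)‖_X ≤ 2(1 - (1 - δ^(1/p))^p) + δ^(p-1) + δ^p. In particular G_p is a uniform homeomorphism with moduli of continuity depending only on p. -/
noncomputable def phiR (p a : ℝ) : ℝ := |a| ^ p * Real.sign a

lemma phiR_of_nonneg {p a : ℝ} (hp : p ≠ 0) (ha : 0 ≤ a) : phiR p a = a ^ p := by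
  rcases eq_or_lt_of_le ha with h | h
  · simp [phiR, ← h, Real.zero_rpow hp]
  · rw [phiR, abs_of_pos h, Real.sign_of_pos h, mul_one]

lemma phiR_neg (p a : ℝ) : phiR p (-a) = -phiR p a := by
  simp [phiR, Real.sign_neg, abs_neg, mul_neg]

lemma abs_phiR {p : ℝ} (hp : p ≠ 0) (a : ℝ) : |phiR p a| = |a| ^ p := by
  rcases lt_trichotomy a 0 with h | h | h
  · rw [phiR, Real.sign_of_neg h, mul_neg_one, abs_neg,
      abs_of_nonneg (Real.rpow_nonneg (abs_nonneg a) p)]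
  · simp [phiR, h, Real.zero_rpow hp]
  · rw [phiR, Real.sign_of_pos h, mul_one,
      abs_of_nonneg (Real.rpow_nonneg (abs_nonneg a) p)]

lemma sign_phiR {p : ℝ} (hp : p ≠ 0) (a : ℝ) : Real.sign (phiR p a) = Real.sign a := by
  rcases lt_trichotomy a 0 with h | h | h
  · have h1 : 0 < |a| ^ p := Real.rpow_pos_of_pos (abs_pos.2 h.ne) p
    rw [phiR, Real.sign_of_neg h, mul_neg_one, Real.sign_of_neg (neg_lt_zero.2 h1)]
  · simp [phiR, h, Real.sign_zero]
  · have h1 : 0 < |a| ^ p := Real.rpow_pos_of_pos (abs_pos.2 h.ne') p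
    rw [phiR, Real.sign_of_pos h, mul_one, Real.sign_of_pos h1]

lemma phiR_one (a : ℝ) : phiR 1 a = a := by
  rcases lt_trichotomy a 0 with h | h | h
  · rw [phiR, Real.rpow_one, Real.sign_of_neg h, abs_of_neg h]; ring
  · simp [phiR, h, Real.sign_zero]
  · rw [phiR, Real.rpow_one, Real.sign_of_pos h, abs_of_pos h, mul_one]

lemma phiR_phiR {q r : ℝ} (hq : q ≠ 0) (a : ℝ) : phiR r (phiR q a) = phiR (q * r) a := by
  rw [phiR, abs_phiR hq, sign_phiR hq, ← Real.rpow_mul (abs_nonneg a), phiR]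

lemma radd {p : ℝ} (hp : 1 ≤ p) {x y : ℝ} (hx : 0 ≤ x) (hy : 0 ≤ y) :
    x ^ p + y ^ p ≤ (x + y) ^ p := by
  lift x to NNReal using hx
  lift y to NNReal using hy
  exact_mod_cast NNReal.add_rpow_le_rpow_add x y hp

lemma two_rpow_lower {p : ℝ} (hp : 1 ≤ p) {x y : ℝ} (hx : 0 ≤ x) (hy : 0 ≤ y) :
    2 ^ (1 - p) * (x + y) ^ p ≤ x ^ p + y ^ p := by
  have h : (x + y) ^ p ≤ 2 ^ (p - 1) * (x ^ p + y ^ p) := by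
    lift x to NNReal using hx
    lift y to NNReal using hy
    exact_mod_cast NNReal.rpow_add_le_mul_rpow_add_rpow x y hp
  have h2 : (0:ℝ) < 2 ^ (p - 1) := Real.rpow_pos_of_pos two_pos _
  have key : (2:ℝ) ^ (1 - p) = ((2:ℝ) ^ (p - 1))⁻¹ := by
    rw [show (1 - p) = -(p - 1) by ring, Real.rpow_neg (by norm_num)]
  rw [key, inv_mul_le_iff₀ h2]
  calc (x + y) ^ p ≤ 2 ^ (p - 1) * (x ^ p + y ^ p) := h
    _ = _ := by ring

lemma phiR_lower {p a b : ℝ} (hp : 1 < p) (hab : b ≤ a) :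
    2 ^ (1 - p) * (a - b) ^ p ≤ phiR p a - phiR p b := by
  have hp1 : 1 ≤ p := hp.le
  have hp0 : p ≠ 0 := by positivity
  have h21 : (2:ℝ) ^ (1 - p) ≤ 1 :=
    Real.rpow_le_one_of_one_le_of_nonpos one_le_two (by linarith)
  have habp : (0:ℝ) ≤ (a - b) ^ p := Real.rpow_nonneg (by linarith) p
  rcases le_or_gt 0 b with hb | hb
  · have h := radd hp1 hb (sub_nonneg.2 hab)
    rw [show b + (a - b) = a by ring] at h
    rw [phiR_of_nonneg hp0 (hb.trans hab), phiR_of_nonneg hp0 hb]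
    nlinarith
  rcases le_or_gt a 0 with ha | ha
  · have h := radd hp1 (neg_nonneg.2 ha) (sub_nonneg.2 (neg_le_neg hab))
    rw [show -a + (-b - -a) = -b by ring] at h
    have e1 : phiR p a = -((-a) ^ p) := by
      rw [← phiR_of_nonneg hp0 (neg_nonneg.2 ha), phiR_neg, neg_neg]
    have e2 : phiR p b = -((-b) ^ p) := by
      rw [← phiR_of_nonneg hp0 (neg_nonneg.2 hb.le), phiR_neg, neg_neg]
    rw [show -b - -a = a - b by ring] at h
    rw [e1, e2]
    nlinarith
  · have h := two_rpow_lower hp1 ha.le (neg_nonneg.2 hb.le)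
    rw [show a + -b = a - b by ring] at h
    have e1 : phiR p a = a ^ p := phiR_of_nonneg hp0 ha.le
    have e2 : phiR p b = -((-b) ^ p) := by
      rw [← phiR_of_nonneg hp0 (neg_nonneg.2 hb.le), phiR_neg, neg_neg]
    rw [e1, e2]
    linarith

lemma phiR_lower_abs {p a b : ℝ} (hp : 1 < p) :
    2 ^ (1 - p) * |a - b| ^ p ≤ |phiR p a - phiR p b| := by
  rcases le_total b a with h | h
  · have h1 := phiR_lower hp h
    have h0 : (0:ℝ) ≤ 2 ^ (1 - p) * (a - b) ^ p :=
      mul_nonneg (Real.rpow_nonneg (by norm_num) _) (Real.rpow_nonneg (by linarith) _)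
    rw [abs_of_nonneg (sub_nonneg.2 h), abs_of_nonneg (le_trans h0 h1)]
    exact h1
  · have h1 := phiR_lower hp h
    have h0 : (0:ℝ) ≤ 2 ^ (1 - p) * (b - a) ^ p :=
      mul_nonneg (Real.rpow_nonneg (by norm_num) _) (Real.rpow_nonneg (by linarith) _)
    rw [abs_sub_comm a b, abs_sub_comm (phiR p a),
      abs_of_nonneg (sub_nonneg.2 h), abs_of_nonneg (le_trans h0 h1)]
    exact h1

lemma core_upper {p ε c d : ℝ} (hp : 1 < p) (hε : 0 < ε) (hε1 : ε ≤ 1)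
    (hd : 0 ≤ d) (hdc : d ≤ c) :
    c ^ p - d ^ p ≤ (1 - (1 - ε) ^ p) * (c ^ p + d ^ p) + (1 / ε) ^ p * (c - d) ^ p := by
  have hp0 : (0:ℝ) ≤ p := by linarith
  have hc : 0 ≤ c := hd.trans hdc
  have hk1 : 0 ≤ 1 - (1 - ε) ^ p := by
    have : (1 - ε) ^ p ≤ 1 := Real.rpow_le_one (by linarith) (by linarith) hp0
    linarith
  have hcp : 0 ≤ c ^ p := Real.rpow_nonneg hc p
  have hdp : 0 ≤ d ^ p := Real.rpow_nonneg hd p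
  rcases le_or_gt (ε * c) (c - d) with h | h
  · have h1 : c ≤ (1 / ε) * (c - d) := by
      rw [one_div, ← div_eq_inv_mul]
      exact (le_div_iff₀ hε).2 (by nlinarith)
    have h2 : c ^ p ≤ ((1 / ε) * (c - d)) ^ p := Real.rpow_le_rpow hc h1 hp0
    rw [Real.mul_rpow (by positivity) (by linarith)] at h2
    nlinarith [mul_nonneg hk1 (add_nonneg hcp hdp)]
  · have h1 : (1 - ε) * c ≤ d := by nlinarith
    have h2 : ((1 - ε) * c) ^ p ≤ d ^ p :=
      Real.rpow_le_rpow (mul_nonneg (by linarith) hc) h1 hp0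
    rw [Real.mul_rpow (by linarith) hc] at h2
    have h3 : 0 ≤ (1 / ε) ^ p * (c - d) ^ p :=
      mul_nonneg (Real.rpow_nonneg (by positivity) _) (Real.rpow_nonneg (by linarith) _)
    nlinarith [mul_nonneg hk1 hdp]

lemma phiR_upper {p ε a b : ℝ} (hp : 1 < p) (hε : 0 < ε) (hε1 : ε ≤ 1) (hab : b ≤ a) :
    phiR p a - phiR p b ≤
      (1 - (1 - ε) ^ p) * (|a| ^ p + |b| ^ p) + (1 / ε) ^ p * (a - b) ^ p := by
  have hp1 : 1 ≤ p := hp.le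
  have hp0 : p ≠ 0 := by positivity
  have hp0' : (0:ℝ) ≤ p := by linarith
  have hk1 : 0 ≤ 1 - (1 - ε) ^ p := by
    have : (1 - ε) ^ p ≤ 1 := Real.rpow_le_one (by linarith) (by linarith) hp0'
    linarith
  rcases le_or_gt 0 b with hb | hb
  · rw [phiR_of_nonneg hp0 (hb.trans hab), phiR_of_nonneg hp0 hb,
      abs_of_nonneg (hb.trans hab), abs_of_nonneg hb]
    exact core_upper hp hε hε1 hb hab
  rcases le_or_gt a 0 with ha | ha
  · have e1 : phiR p a = -((-a) ^ p) := by
      rw [← phiR_of_nonneg hp0 (neg_nonneg.2 ha), phiR_neg, neg_neg]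
    have e2 : phiR p b = -((-b) ^ p) := by
      rw [← phiR_of_nonneg hp0 (neg_nonneg.2 hb.le), phiR_neg, neg_neg]
    have h := core_upper hp hε hε1 (neg_nonneg.2 ha) (neg_le_neg hab)
    rw [show -b - -a = a - b by ring] at h
    rw [e1, e2, abs_of_nonpos ha, abs_of_nonpos hb.le]
    linarith
  · have e1 : phiR p a = a ^ p := phiR_of_nonneg hp0 ha.le
    have e2 : phiR p b = -((-b) ^ p) := by
      rw [← phiR_of_nonneg hp0 (neg_nonneg.2 hb.le), phiR_neg, neg_neg]
    have h1 : a ^ p + (-b) ^ p ≤ (a - b) ^ p := by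
      have := radd hp1 ha.le (neg_nonneg.2 hb.le)
      rwa [show a + -b = a - b by ring] at this
    have h2 : (1:ℝ) ≤ (1 / ε) ^ p := by
      calc (1:ℝ) = 1 ^ p := (Real.one_rpow p).symm
        _ ≤ (1 / ε) ^ p :=
          Real.rpow_le_rpow zero_le_one (by rw [le_div_iff₀ hε]; linarith) hp0'
    have h3 : (0:ℝ) ≤ (a - b) ^ p := Real.rpow_nonneg (by linarith) p
    have h4 : 0 ≤ (1 - (1 - ε) ^ p) * (|a| ^ p + |b| ^ p) :=
      mul_nonneg hk1 (add_nonneg (Real.rpow_nonneg (abs_nonneg _) _)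
        (Real.rpow_nonneg (abs_nonneg _) _))
    rw [e1, e2]
    nlinarith

lemma phiR_upper_abs {p ε a b : ℝ} (hp : 1 < p) (hε : 0 < ε) (hε1 : ε ≤ 1) :
    |phiR p a - phiR p b| ≤
      (1 - (1 - ε) ^ p) * (|a| ^ p + |b| ^ p) + (1 / ε) ^ p * |a - b| ^ p := by
  rcases le_total b a with h | h
  · have hnn : 0 ≤ phiR p a - phiR p b := by
      have h1 := phiR_lower hp h
      have h0 : (0:ℝ) ≤ 2 ^ (1 - p) * (a - b) ^ p :=
        mul_nonneg (Real.rpow_nonneg (by norm_num) _) (Real.rpow_nonneg (by linarith) _)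
      linarith
    rw [abs_of_nonneg hnn, abs_of_nonneg (sub_nonneg.2 h)]
    exact phiR_upper hp hε hε1 h
  · have hnn : 0 ≤ phiR p b - phiR p a := by
      have h1 := phiR_lower hp h
      have h0 : (0:ℝ) ≤ 2 ^ (1 - p) * (b - a) ^ p :=
        mul_nonneg (Real.rpow_nonneg (by norm_num) _) (Real.rpow_nonneg (by linarith) _)
      linarith
    rw [abs_sub_comm (phiR p a), abs_sub_comm a b,
      abs_of_nonneg hnn, abs_of_nonneg (sub_nonneg.2 h), add_comm (|a| ^ p)]
    exact phiR_upper hp hε hε1 h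


/-- Let `X` (norm `N`) be a Banach lattice of real functions on `Ω` and
`1 < p < ∞`. With the `p`-convexification norm `Np f = ‖|f|^p‖^(1/p)` and the
map `Gp f = |f|^p · sign f`, `Gp` is a bijection from `S(X^(p))` onto `S(X)`
and for `f, g ∈ S(X^(p))` with `δ = Np(f-g) < 1`,
`2^(1-p) δ^p ≤ ‖Gp f - Gp g‖ ≤ 2(1 - (1 - δ^(1/p))^p) + δ^(p-1) + δ^p`;
in particular `Gp` is a uniform homeomorphism with moduli of continuity
depending only on `p`. -/
theorem p_convexification_sphere_homeo {Ω : Type*} (N : (Ω → ℝ) → ℝ)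
    (p : ℝ) (hp : 1 < p)
    (hadd : ∀ f g : Ω → ℝ, N (f + g) ≤ N f + N g)
    (hsmul : ∀ (c : ℝ) (f : Ω → ℝ), N (c • f) = |c| * N f)
    (hmono : ∀ f g : Ω → ℝ, (∀ ω, |f ω| ≤ |g ω|) → N f ≤ N g) :
    let Np : (Ω → ℝ) → ℝ := fun f => (N fun ω => |f ω| ^ p) ^ (1 / p)
    let Gp : (Ω → ℝ) → (Ω → ℝ) := fun f ω => |f ω| ^ p * Real.sign (f ω)
    Set.BijOn Gp {f | Np f = 1} {f | N f = 1} ∧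
    ∀ f g : Ω → ℝ, Np f = 1 → Np g = 1 → Np (f - g) < 1 →
      (2 : ℝ) ^ (1 - p) * Np (f - g) ^ p ≤ N (Gp f - Gp g) ∧
      N (Gp f - Gp g) ≤
        2 * (1 - (1 - Np (f - g) ^ (1 / p)) ^ p) + Np (f - g) ^ (p - 1)
          + Np (f - g) ^ p := by
  intro Np Gp
  have hp0 : (0:ℝ) < p := lt_trans one_pos hp
  have hp0' : p ≠ 0 := ne_of_gt hp0
  have hip : (0:ℝ) < 1 / p := by positivity
  have hGp : ∀ (f : Ω → ℝ) (ω : Ω), Gp f ω = phiR p (f ω) := fun f ω => rfl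
  have hNp : ∀ f : Ω → ℝ, Np f = (N fun ω => |f ω| ^ p) ^ (1 / p) := fun f => rfl
  have hzero : N 0 = 0 := by
    have h := hsmul 0 0
    rwa [zero_smul, abs_zero, zero_mul] at h
  have hneg : ∀ f : Ω → ℝ, N (-f) = N f := by
    intro f
    have h := hsmul (-1) f
    rwa [neg_one_smul, abs_neg, abs_one, one_mul] at h
  have hnonneg : ∀ f : Ω → ℝ, 0 ≤ N f := by
    intro f
    have h := hadd f (-f)
    rw [add_neg_cancel, hzero, hneg] at h
    linarith
  have hNeq : ∀ f g : Ω → ℝ, (∀ ω, |f ω| = |g ω|) → N f = N g := by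
    intro f g h
    exact le_antisymm (hmono f g fun ω => (h ω).le) (hmono g f fun ω => (h ω).ge)
  have hsph : ∀ f : Ω → ℝ, Np f = 1 → N (fun ω => |f ω| ^ p) = 1 := by
    intro f hf
    rw [hNp] at hf
    have h := congrArg (fun x : ℝ => x ^ p) hf
    simpa [← Real.rpow_mul (hnonneg _), inv_mul_cancel₀ hp0'] using h
  have hphiinv : ∀ x : ℝ, phiR (1/p) (phiR p x) = x := by
    intro x
    rw [phiR_phiR hp0', mul_one_div_cancel hp0', phiR_one]
  have hphiinv' : ∀ x : ℝ, phiR p (phiR (1/p) x) = x := by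
    intro x
    rw [phiR_phiR (ne_of_gt hip), one_div_mul_cancel hp0', phiR_one]
  constructor
  · refine ⟨?_, ?_, ?_⟩
    · -- MapsTo
      intro f hf
      have h1 : N (Gp f) = N (fun ω => |f ω| ^ p) := by
        apply hNeq
        intro ω
        show |Gp f ω| = abs (|f ω| ^ p)
        rw [hGp, abs_phiR hp0', abs_of_nonneg (Real.rpow_nonneg (abs_nonneg _) _)]
      show N (Gp f) = 1
      rw [h1]
      exact hsph f hf
    · -- InjOn
      intro f _ g _ hfg
      funext ω
      have h := congrFun hfg ω
      rw [hGp, hGp] at h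
      calc f ω = phiR (1/p) (phiR p (f ω)) := (hphiinv _).symm
        _ = phiR (1/p) (phiR p (g ω)) := by rw [h]
        _ = g ω := hphiinv _
    · -- SurjOn
      intro h hh
      have hh1 : N h = 1 := hh
      refine ⟨fun ω => phiR (1/p) (h ω), ?_, ?_⟩
      · show Np (fun ω => phiR (1/p) (h ω)) = 1
        rw [hNp]
        have he : N (fun ω => |(fun ω => phiR (1/p) (h ω)) ω| ^ p) = N h := by
          apply hNeq
          intro ω
          show abs (|phiR (1/p) (h ω)| ^ p) = |h ω|
          rw [abs_of_nonneg (Real.rpow_nonneg (abs_nonneg _) _),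
            abs_phiR (ne_of_gt hip), ← Real.rpow_mul (abs_nonneg _),
            one_div_mul_cancel hp0', Real.rpow_one]
        rw [he, hh1, Real.one_rpow]
      · funext ω
        exact hphiinv' (h ω)
  · -- quantitative estimates
    intro f g hf hg hdlt
    set δ := Np (f - g) with hddef
    have hd0 : 0 ≤ δ := by rw [hddef, hNp]; exact Real.rpow_nonneg (hnonneg _) _
    set C : Ω → ℝ := fun ω => |(f - g) ω| ^ p with hC
    have hNC : N C = δ ^ p := by
      have h : (N C) ^ (1/p) = δ := by rw [hddef, hNp, hC]
      rw [← h, ← Real.rpow_mul (hnonneg C), one_div_mul_cancel hp0', Real.rpow_one]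
    have hNA : N (fun ω => |f ω| ^ p) = 1 := hsph f hf
    have hNB : N (fun ω => |g ω| ^ p) = 1 := hsph g hg
    have hGpdiff : ∀ ω, (Gp f - Gp g) ω = phiR p (f ω) - phiR p (g ω) := by
      intro ω; simp only [Pi.sub_apply, hGp]
    constructor
    · -- lower bound
      have hptw : ∀ ω, |(((2:ℝ) ^ (1 - p)) • C) ω| ≤ |(Gp f - Gp g) ω| := by
        intro ω
        rw [hGpdiff ω, Pi.smul_apply, smul_eq_mul, hC]
        have h0 : (0:ℝ) ≤ 2 ^ (1 - p) * |(f - g) ω| ^ p :=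
          mul_nonneg (Real.rpow_nonneg (by norm_num) _) (Real.rpow_nonneg (abs_nonneg _) _)
        rw [abs_of_nonneg h0, Pi.sub_apply]
        exact phiR_lower_abs hp
      have hlow := hmono _ _ hptw
      rwa [hsmul, abs_of_nonneg (Real.rpow_nonneg (by norm_num : (0:ℝ) ≤ 2) _), hNC] at hlow
    · -- upper bound
      have upper : ∀ ε : ℝ, 0 < ε → ε ≤ 1 →
          N (Gp f - Gp g) ≤ 2 * (1 - (1 - ε) ^ p) + (1 / ε) ^ p * δ ^ p := by
        intro ε hε hε1
        set k₁ : ℝ := 1 - (1 - ε) ^ p with hk₁def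
        set k₂ : ℝ := (1 / ε) ^ p with hk₂def
        have hk1 : 0 ≤ k₁ := by
          have h9 : (1 - ε) ^ p ≤ 1 := Real.rpow_le_one (by linarith) (by linarith) (le_of_lt hp0)
          rw [hk₁def]; linarith
        have hk2 : 0 ≤ k₂ := by rw [hk₂def]; exact Real.rpow_nonneg (by positivity) _
        set A : Ω → ℝ := fun ω => |f ω| ^ p with hA
        set B : Ω → ℝ := fun ω => |g ω| ^ p with hB
        have step1 : N (Gp f - Gp g) ≤ N (k₁ • A + k₁ • B + k₂ • C) := by
          apply hmono
          intro ω
          have hAω : (0:ℝ) ≤ A ω := Real.rpow_nonneg (abs_nonneg _) _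
          have hBω : (0:ℝ) ≤ B ω := Real.rpow_nonneg (abs_nonneg _) _
          have hCω : (0:ℝ) ≤ C ω := Real.rpow_nonneg (abs_nonneg _) _
          have hW : (k₁ • A + k₁ • B + k₂ • C) ω = k₁ * A ω + k₁ * B ω + k₂ * C ω := by
            simp [Pi.add_apply, Pi.smul_apply, smul_eq_mul]
          rw [hW, abs_of_nonneg (add_nonneg (add_nonneg (mul_nonneg hk1 hAω)
            (mul_nonneg hk1 hBω)) (mul_nonneg hk2 hCω)), hGpdiff ω]
          have h := phiR_upper_abs (p := p) (ε := ε) (a := f ω) (b := g ω) hp hε hε1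
          have heq : (1 - (1 - ε) ^ p) * (|f ω| ^ p + |g ω| ^ p)
              + (1/ε) ^ p * |f ω - g ω| ^ p = k₁ * A ω + k₁ * B ω + k₂ * C ω := by
            rw [hk₁def, hk₂def, hA, hB, hC]
            simp only [Pi.sub_apply]
            ring
          rw [← heq]
          exact h
        have step2 : N (k₁ • A + k₁ • B + k₂ • C) ≤ k₁ * 1 + k₁ * 1 + k₂ * δ ^ p := by
          calc N (k₁ • A + k₁ • B + k₂ • C)
              ≤ N (k₁ • A + k₁ • B) + N (k₂ • C) := hadd _ _
            _ ≤ N (k₁ • A) + N (k₁ • B) + N (k₂ • C) := by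
                have h9 := hadd (k₁ • A) (k₁ • B); linarith
            _ = k₁ * N A + k₁ * N B + k₂ * N C := by
                rw [hsmul, hsmul, hsmul, abs_of_nonneg hk1, abs_of_nonneg hk2]
            _ = k₁ * 1 + k₁ * 1 + k₂ * δ ^ p := by rw [hNA, hNB, hNC]
        calc N (Gp f - Gp g) ≤ k₁ * 1 + k₁ * 1 + k₂ * δ ^ p := le_trans step1 step2
          _ = 2 * (1 - (1 - ε) ^ p) + (1 / ε) ^ p * δ ^ p := by
              rw [hk₁def, hk₂def]; ring
      rcases eq_or_lt_of_le hd0 with h0 | hdpos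
      · -- δ = 0
        rw [← h0, Real.zero_rpow (ne_of_gt hip),
          Real.zero_rpow (ne_of_gt (by linarith : (0:ℝ) < p - 1)),
          Real.zero_rpow hp0', sub_zero, Real.one_rpow]
        norm_num
        by_contra hcon
        push_neg at hcon
        set r := N (Gp f - Gp g) with hr
        set ε : ℝ := min (r / (4 * p)) 1 with hεdef
        have hε : 0 < ε := lt_min (by positivity) one_pos
        have hε1 : ε ≤ 1 := min_le_right _ _
        have h1 := upper ε hε hε1
        rw [← h0, Real.zero_rpow hp0', mul_zero, add_zero] at h1
        have hbern : 1 - p * ε ≤ (1 - ε) ^ p := by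
          have h := one_add_mul_self_le_rpow_one_add (by linarith : (-1:ℝ) ≤ -ε) hp.le
          simpa [mul_neg, ← sub_eq_add_neg] using h
        have hεle : ε ≤ r / (4 * p) := min_le_left _ _
        have h3 : r ≤ 2 * (p * ε) := by linarith
        have h4 : p * ε ≤ p * (r / (4 * p)) := mul_le_mul_of_nonneg_left hεle (le_of_lt hp0)
        have h5 : p * (r / (4 * p)) = r / 4 := by field_simp
        linarith
      · -- δ > 0
        set ε : ℝ := δ ^ (1/p) with hεdef
        have hε : 0 < ε := Real.rpow_pos_of_pos hdpos _
        have hε1 : ε ≤ 1 := Real.rpow_le_one hd0 (le_of_lt hdlt) (le_of_lt hip)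
        have h1 := upper ε hε hε1
        have hεp : ε ^ p = δ := by
          rw [hεdef, ← Real.rpow_mul hd0, one_div_mul_cancel hp0', Real.rpow_one]
        have hkey : (1 / ε) ^ p * δ ^ p = δ ^ (p - 1) := by
          rw [one_div, Real.inv_rpow (le_of_lt hε), hεp,
            show p - 1 = p + (-1) by ring, Real.rpow_add hdpos, Real.rpow_neg_one]
          ring
        rw [hkey] at h1
        have hdp : 0 ≤ δ ^ p := Real.rpow_nonneg hd0 p
        linarith
end

section
/- Let F : S(L₁[0,1]) → S(ℓ₁) be a uniform homeomorphism and I a countable set. Define H : S((L₁[0,1] ⊕ ℓ₁(I))₁) → S((ℓ₁ ⊕ ℓ₁(I))₁) by H(g,x) = (‖g‖·F(g/‖g‖), x) for g ≠ 0 and H(0,x) = (0,x). Then H is a uniform homeomorphism. -/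
section cone
variable {E E' : Type*} [NormedAddCommGroup E] [NormedSpace ℝ E]
  [NormedAddCommGroup E'] [NormedSpace ℝ E']

noncomputable def coneExt (F : E → E') (g : E) : E' := ‖g‖ • F (‖g‖⁻¹ • g)

lemma coneExt_zero (F : E → E') : coneExt F 0 = 0 := by simp [coneExt]

lemma unit_mem (g : E) (hg : g ≠ 0) : ‖(‖g‖⁻¹ • g)‖ = 1 := by
  rw [norm_smul, norm_inv, norm_norm]
  rw [inv_mul_cancel₀ (norm_ne_zero_iff.mpr hg)]


lemma coneExt_norm (F : E → E') (hFn : ∀ g, ‖g‖ = 1 → ‖F g‖ = 1) (g : E) :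
    ‖coneExt F g‖ = ‖g‖ := by
  rcases eq_or_ne g 0 with rfl | hg
  · simp [coneExt]
  · rw [coneExt, norm_smul, norm_norm, hFn _ (unit_mem g hg), mul_one]

lemma coneExt_inv (F : E → E') (F' : E' → E)
    (hFn : ∀ g, ‖g‖ = 1 → ‖F g‖ = 1)
    (hinv : ∀ g, ‖g‖ = 1 → F' (F g) = g) (g : E) :
    coneExt F' (coneExt F g) = g := by
  rcases eq_or_ne g 0 with rfl | hg
  · simp [coneExt]
  · have hu : ‖(‖g‖⁻¹ • g)‖ = 1 := unit_mem g hg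
    have hgn : ‖g‖ ≠ 0 := norm_ne_zero_iff.mpr hg
    rw [coneExt, coneExt, norm_smul, norm_norm, hFn _ hu, mul_one,
      inv_smul_smul₀ hgn, hinv _ hu, smul_inv_smul₀ hgn]

/-- Distance estimate between normalizations. -/
lemma unit_dist_le (g k : E) (hk : k ≠ 0) (hkg : ‖k‖ ≤ ‖g‖) :
    ‖(‖g‖⁻¹ • g) - (‖k‖⁻¹ • k)‖ ≤ 2 * ‖g - k‖ / ‖g‖ := by
  have hkpos : (0:ℝ) < ‖k‖ := norm_pos_iff.mpr hk
  have hgpos : (0:ℝ) < ‖g‖ := lt_of_lt_of_le hkpos hkg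
  have key : (‖g‖⁻¹ • g) - (‖k‖⁻¹ • k)
      = ‖g‖⁻¹ • (g - k) + (‖g‖⁻¹ - ‖k‖⁻¹) • k := by
    rw [smul_sub, sub_smul]; abel
  rw [key]
  have h1 : ‖(‖g‖⁻¹ • (g - k))‖ = ‖g - k‖ / ‖g‖ := by
    rw [norm_smul, norm_inv, norm_norm, div_eq_inv_mul]
  have h2 : ‖((‖g‖⁻¹ - ‖k‖⁻¹) • k)‖ ≤ ‖g - k‖ / ‖g‖ := by
    rw [norm_smul, Real.norm_eq_abs]
    have : |‖g‖⁻¹ - ‖k‖⁻¹| = (‖g‖ - ‖k‖) / (‖g‖ * ‖k‖) := by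
      rw [abs_of_nonpos (by
        simp only [sub_nonpos]
        exact inv_anti₀ hkpos hkg), neg_sub]
      field_simp
    rw [this]
    have hnd : ‖g‖ - ‖k‖ ≤ ‖g - k‖ := (abs_le.mp (abs_norm_sub_norm_le g k)).2
    calc (‖g‖ - ‖k‖) / (‖g‖ * ‖k‖) * ‖k‖ = (‖g‖ - ‖k‖) / ‖g‖ := by
          field_simp
      _ ≤ ‖g - k‖ / ‖g‖ := by gcongr
  calc ‖(‖g‖⁻¹ • (g - k)) + ((‖g‖⁻¹ - ‖k‖⁻¹) • k)‖
      ≤ ‖(‖g‖⁻¹ • (g - k))‖ + ‖((‖g‖⁻¹ - ‖k‖⁻¹) • k)‖ := norm_add_le _ _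
    _ ≤ ‖g - k‖ / ‖g‖ + ‖g - k‖ / ‖g‖ := by rw [h1]; gcongr
    _ = 2 * ‖g - k‖ / ‖g‖ := by ring

lemma coneExt_uc (F : E → E') (hFn : ∀ g, ‖g‖ = 1 → ‖F g‖ = 1)
    (hF : UniformContinuousOn F {g : E | ‖g‖ = 1}) :
    ∀ ε > 0, ∃ δ > 0, ∀ g : E, ‖g‖ ≤ 1 → ∀ k : E, ‖k‖ ≤ 1 → ‖g - k‖ < δ →
      ‖coneExt F g - coneExt F k‖ < ε := by
  intro ε hε
  obtain ⟨δ₀, hδ₀, hδ⟩ := Metric.uniformContinuousOn_iff.mp hF (ε/2) (by linarith)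
  refine ⟨min (ε/6) (δ₀ * (ε/3) / 2), lt_min (by linarith) (by positivity), ?_⟩
  intro g hg1 k hk1 hd
  have hd1 : ‖g - k‖ < ε/6 := lt_of_lt_of_le hd (min_le_left _ _)
  have hd2 : ‖g - k‖ < δ₀ * (ε/3) / 2 := lt_of_lt_of_le hd (min_le_right _ _)
  by_cases hsmall : ‖g‖ ≤ ε/3 ∧ ‖k‖ ≤ ε/3
  · calc ‖coneExt F g - coneExt F k‖ ≤ ‖coneExt F g‖ + ‖coneExt F k‖ :=
        norm_sub_le _ _
      _ = ‖g‖ + ‖k‖ := by rw [coneExt_norm F hFn, coneExt_norm F hFn]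
      _ ≤ ε/3 + ε/3 := add_le_add hsmall.1 hsmall.2
      _ < ε := by linarith
  · -- at least one norm is > ε/3; wlog the larger one is ‖g‖
    wlog hkg : ‖k‖ ≤ ‖g‖ generalizing g k
    · rw [norm_sub_rev]
      exact this k hk1 g hg1 (by rwa [norm_sub_rev]) (by rwa [norm_sub_rev])
        (by rwa [norm_sub_rev]) (fun h => hsmall ⟨h.2, h.1⟩) (le_of_not_ge hkg)
    have hgbig : ε/3 < ‖g‖ := by
      rcases not_and_or.mp hsmall with h | h
      · exact lt_of_not_ge h
      · exact lt_of_lt_of_le (lt_of_not_ge h) hkg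
    have hkpos : (0:ℝ) < ‖k‖ := by
      have : ‖g‖ - ‖k‖ ≤ ‖g - k‖ := (abs_le.mp (abs_norm_sub_norm_le g k)).2
      linarith
    have hk0 : k ≠ 0 := norm_pos_iff.mp hkpos
    have hg0 : g ≠ 0 := norm_pos_iff.mp (lt_of_lt_of_le hkpos hkg)
    have hgpos : (0:ℝ) < ‖g‖ := lt_of_lt_of_le hkpos hkg
    have hunit : ‖(‖g‖⁻¹ • g) - (‖k‖⁻¹ • k)‖ < δ₀ := by
      calc ‖(‖g‖⁻¹ • g) - (‖k‖⁻¹ • k)‖ ≤ 2 * ‖g - k‖ / ‖g‖ :=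
          unit_dist_le g k hk0 hkg
        _ < 2 * (δ₀ * (ε/3) / 2) / (ε/3) := by gcongr
        _ = δ₀ := by field_simp
    have hFclose : ‖F (‖g‖⁻¹ • g) - F (‖k‖⁻¹ • k)‖ < ε/2 := by
      have := hδ _ (unit_mem g hg0) _ (unit_mem k hk0)
        (by rwa [dist_eq_norm])
      rwa [dist_eq_norm] at this
    have hdecomp : coneExt F g - coneExt F k
        = (‖g‖ - ‖k‖) • F (‖g‖⁻¹ • g) + ‖k‖ • (F (‖g‖⁻¹ • g) - F (‖k‖⁻¹ • k)) := by
      rw [coneExt, coneExt, smul_sub, sub_smul]; abel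
    rw [hdecomp]
    have hnd : |‖g‖ - ‖k‖| ≤ ‖g - k‖ := abs_norm_sub_norm_le g k
    calc ‖(‖g‖ - ‖k‖) • F (‖g‖⁻¹ • g) + ‖k‖ • (F (‖g‖⁻¹ • g) - F (‖k‖⁻¹ • k))‖
        ≤ ‖(‖g‖ - ‖k‖) • F (‖g‖⁻¹ • g)‖ + ‖‖k‖ • (F (‖g‖⁻¹ • g) - F (‖k‖⁻¹ • k))‖ :=
          norm_add_le _ _
      _ = |‖g‖ - ‖k‖| * ‖F (‖g‖⁻¹ • g)‖ + ‖k‖ * ‖F (‖g‖⁻¹ • g) - F (‖k‖⁻¹ • k)‖ := by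
          rw [norm_smul, norm_smul, Real.norm_eq_abs, norm_norm]
      _ ≤ ‖g - k‖ * 1 + 1 * (ε/2) := by
          have h1 : ‖F (‖g‖⁻¹ • g)‖ ≤ 1 := le_of_eq (hFn _ (unit_mem g hg0))
          exact add_le_add (mul_le_mul hnd h1 (norm_nonneg _) (norm_nonneg _))
            (mul_le_mul hk1 (le_of_lt hFclose) (norm_nonneg _) zero_le_one)
      _ < ε := by linarith

end cone
open MeasureTheory

section main
variable {E E' : Type*} [NormedAddCommGroup E] [NormedSpace ℝ E]
  [NormedAddCommGroup E'] [NormedSpace ℝ E']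

-- generic product-level statement
lemma prod_cone_uc {G : Type*} [NormedAddCommGroup G]
    (F : E → E') (hFn : ∀ g, ‖g‖ = 1 → ‖F g‖ = 1)
    (hF : UniformContinuousOn F {g : E | ‖g‖ = 1}) :
    UniformContinuousOn (fun z : E × G => (coneExt F z.1, z.2))
      {z : E × G | ‖z.1‖ + ‖z.2‖ = 1} := by
  rw [Metric.uniformContinuousOn_iff]
  intro ε hε
  obtain ⟨δ, hδpos, hδ⟩ := coneExt_uc F hFn hF ε hε
  refine ⟨min δ ε, lt_min hδpos hε, ?_⟩
  intro z hz w hw hd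
  have hz1 : ‖z.1‖ ≤ 1 := by
    have := norm_nonneg z.2; have hz' : ‖z.1‖ + ‖z.2‖ = 1 := hz; linarith
  have hw1 : ‖w.1‖ ≤ 1 := by
    have := norm_nonneg w.2; have hw' : ‖w.1‖ + ‖w.2‖ = 1 := hw; linarith
  rw [Prod.dist_eq] at hd ⊢
  have hd1 : dist z.1 w.1 < min δ ε := lt_of_le_of_lt (le_max_left _ _) hd
  have hd2 : dist z.2 w.2 < min δ ε := lt_of_le_of_lt (le_max_right _ _) hd
  refine max_lt ?_ (lt_of_lt_of_le hd2 (min_le_right _ _))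
  rw [dist_eq_norm]
  exact hδ _ hz1 _ hw1 (by
    rw [dist_eq_norm] at hd1
    exact lt_of_lt_of_le hd1 (min_le_left _ _))

end main

/-- Let `F : S(L₁[0,1]) → S(ℓ₁)` be a uniform homeomorphism (with inverse `F'`)
and `I` a countable set. Then `H(g,x) = (‖g‖·F(g/‖g‖), x)` (and `H(0,x) = (0,x)`)
is a uniform homeomorphism from `S((L₁[0,1] ⊕ ℓ₁(I))₁)` onto `S((ℓ₁ ⊕ ℓ₁(I))₁)`. -/
theorem sphere_homeo_direct_sum (I : Type*) [Countable I]
    (F : Lp ℝ 1 (volume.restrict (Set.Icc (0 : ℝ) 1)) → lp (fun _ : ℕ => ℝ) 1)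
    (F' : lp (fun _ : ℕ => ℝ) 1 → Lp ℝ 1 (volume.restrict (Set.Icc (0 : ℝ) 1)))
    (hbij : Set.BijOn F {g | ‖g‖ = 1} {y | ‖y‖ = 1})
    (hFuc : UniformContinuousOn F {g | ‖g‖ = 1})
    (hinv : ∀ g, ‖g‖ = 1 → F' (F g) = g)
    (hinv' : ∀ y, ‖y‖ = 1 → F (F' y) = y)
    (hF'uc : UniformContinuousOn F' {y | ‖y‖ = 1}) :
    let G := lp (fun _ : I => ℝ) 1
    let H : (Lp ℝ 1 (volume.restrict (Set.Icc (0 : ℝ) 1)) × G) →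
        (lp (fun _ : ℕ => ℝ) 1 × G) :=
      fun z => (‖z.1‖ • F (‖z.1‖⁻¹ • z.1), z.2)
    let S₁ := {z : Lp ℝ 1 (volume.restrict (Set.Icc (0 : ℝ) 1)) × G |
      ‖z.1‖ + ‖z.2‖ = 1}
    let S₂ := {w : lp (fun _ : ℕ => ℝ) 1 × G | ‖w.1‖ + ‖w.2‖ = 1}
    Set.BijOn H S₁ S₂ ∧ UniformContinuousOn H S₁ ∧
      ∃ H' : (lp (fun _ : ℕ => ℝ) 1 × G) →
          (Lp ℝ 1 (volume.restrict (Set.Icc (0 : ℝ) 1)) × G),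
        (∀ z ∈ S₁, H' (H z) = z) ∧ UniformContinuousOn H' S₂ := by
  intro G H S₁ S₂
  have hFn : ∀ g, ‖g‖ = 1 → ‖F g‖ = 1 := fun g hg => hbij.mapsTo hg
  have hF'n : ∀ y, ‖y‖ = 1 → ‖F' y‖ = 1 := by
    intro y hy
    obtain ⟨g, hg, rfl⟩ := hbij.surjOn hy
    rw [hinv g hg]; exact hg
  have hHdef : ∀ z, H z = (coneExt F z.1, z.2) := fun z => rfl
  set H' : (lp (fun _ : ℕ => ℝ) 1 × G) →
      (Lp ℝ 1 (volume.restrict (Set.Icc (0 : ℝ) 1)) × G) :=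
    fun w => (coneExt F' w.1, w.2) with hH'def
  have hleft : ∀ z, H' (H z) = z := by
    intro z
    rw [hHdef, hH'def]
    simp only
    rw [coneExt_inv F F' hFn hinv]
  have hright : ∀ w, H (H' w) = w := by
    intro w
    rw [hHdef, hH'def]
    simp only
    rw [coneExt_inv F' F hF'n hinv']
  have hmaps : Set.MapsTo H S₁ S₂ := by
    intro z hz
    have hz' : ‖z.1‖ + ‖z.2‖ = 1 := hz
    show ‖(H z).1‖ + ‖(H z).2‖ = 1
    rw [hHdef]
    simpa [coneExt_norm F hFn] using hz'
  have hmaps' : Set.MapsTo H' S₂ S₁ := by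
    intro w hw
    have hw' : ‖w.1‖ + ‖w.2‖ = 1 := hw
    show ‖(H' w).1‖ + ‖(H' w).2‖ = 1
    rw [hH'def]
    simpa [coneExt_norm F' hF'n] using hw'
  refine ⟨⟨hmaps, ?_, ?_⟩, ?_, H', fun z _ => hleft z, ?_⟩
  · intro a _ b _ hab
    have := congrArg H' hab
    rwa [hleft, hleft] at this
  · intro w hw
    exact ⟨H' w, hmaps' hw, hright w⟩
  · have := prod_cone_uc (G := G) F hFn hFuc
    convert this using 2
    exact hHdef _
  · have := prod_cone_uc (G := G) F' hF'n hF'uc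
    convert this using 2
end

section
/- If X and Y are Banach spaces and Φ : S(X) → S(Y) is a uniform homeomorphism of their unit spheres, then the map Ψ : Ba(X) → Ba(Y) defined by Ψ(x) = ‖x‖·Φ(x/‖x‖) for x ≠ 0 and Ψ(0) = 0 is a uniform homeomorphism of the closed unit balls. -/
lemma unit_norm {X : Type*} [NormedAddCommGroup X] [NormedSpace ℝ X]
    {x : X} (hx : x ≠ 0) : ‖(‖x‖⁻¹ • x : X)‖ = 1 := by
  rw [norm_smul, norm_inv, norm_norm, inv_mul_cancel₀ (norm_ne_zero_iff.mpr hx)]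

lemma sphere_ext_norm_eq {X Y : Type*}
    [NormedAddCommGroup X] [NormedSpace ℝ X]
    [NormedAddCommGroup Y] [NormedSpace ℝ Y]
    (Φ : X → Y) (hn : ∀ x : X, ‖x‖ = 1 → ‖Φ x‖ = 1) (x : X) :
    ‖(‖x‖ • Φ (‖x‖⁻¹ • x) : Y)‖ = ‖x‖ := by
  rcases eq_or_ne x 0 with rfl | hx
  · simp
  · rw [norm_smul, hn _ (unit_norm hx)]
    simp [abs_of_nonneg (norm_nonneg x)]

lemma sphere_ext_uc {X Y : Type*}
    [NormedAddCommGroup X] [NormedSpace ℝ X]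
    [NormedAddCommGroup Y] [NormedSpace ℝ Y]
    (Φ : X → Y) (hn : ∀ x : X, ‖x‖ = 1 → ‖Φ x‖ = 1)
    (huc : UniformContinuousOn Φ {x | ‖x‖ = 1}) :
    UniformContinuousOn (fun x => ‖x‖ • Φ (‖x‖⁻¹ • x)) {x : X | ‖x‖ ≤ 1} := by
  rw [Metric.uniformContinuousOn_iff] at huc ⊢
  intro ε hε
  obtain ⟨δ, hδ, hδΦ⟩ := huc (ε / 2) (by positivity)
  refine ⟨min (ε / 2) (δ * ε / 8), by positivity, ?_⟩
  have key : ∀ x ∈ {x : X | ‖x‖ ≤ 1}, ∀ x' ∈ {x : X | ‖x‖ ≤ 1}, ‖x'‖ ≤ ‖x‖ →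
      dist x x' < min (ε / 2) (δ * ε / 8) →
      dist (‖x‖ • Φ (‖x‖⁻¹ • x)) (‖x'‖ • Φ (‖x'‖⁻¹ • x')) < ε := by
    intro x hx x' hx' hle hd
    have hd1 : dist x x' < ε / 2 := lt_of_lt_of_le hd (min_le_left _ _)
    have hd2 : dist x x' < δ * ε / 8 := lt_of_lt_of_le hd (min_le_right _ _)
    rw [dist_eq_norm] at hd1 hd2 ⊢
    rcases le_or_gt ‖x'‖ (ε / 4) with hsmall | hbig
    · -- both norms small
      calc ‖‖x‖ • Φ (‖x‖⁻¹ • x) - ‖x'‖ • Φ (‖x'‖⁻¹ • x')‖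
          ≤ ‖‖x‖ • Φ (‖x‖⁻¹ • x)‖ + ‖‖x'‖ • Φ (‖x'‖⁻¹ • x')‖ := norm_sub_le _ _
        _ = ‖x‖ + ‖x'‖ := by rw [sphere_ext_norm_eq Φ hn, sphere_ext_norm_eq Φ hn]
        _ ≤ (‖x'‖ + ‖x - x'‖) + ‖x'‖ := by
            have := norm_sub_norm_le x x'
            linarith
        _ < (ε / 4 + ε / 2) + ε / 4 := by linarith
        _ = ε := by ring
    · -- norms bounded below
      have hx'0 : x' ≠ 0 := by
        intro h; rw [h, norm_zero] at hbig; linarith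
      have hx0 : x ≠ 0 := by
        intro h; rw [h, norm_zero] at hle
        have := norm_nonneg x'; have : ‖x'‖ = 0 := le_antisymm hle (norm_nonneg x')
        exact hx'0 (norm_eq_zero.mp this)
      have hxpos : (0:ℝ) < ‖x‖ := norm_pos_iff.mpr hx0
      have hx'pos : (0:ℝ) < ‖x'‖ := norm_pos_iff.mpr hx'0
      set u := ‖x‖⁻¹ • x with hu
      set u' := ‖x'‖⁻¹ • x' with hu'
      have hun : ‖u‖ = 1 := unit_norm hx0
      have hu'n : ‖u'‖ = 1 := unit_norm hx'0
      -- ‖u - u'‖ ≤ 2‖x - x'‖ / ‖x‖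
      have huu' : ‖u - u'‖ ≤ 2 * ‖x - x'‖ / ‖x‖ := by
        have decomp : u - u' = ‖x‖⁻¹ • (x - x') + (‖x‖⁻¹ - ‖x'‖⁻¹) • x' := by
          rw [hu, hu']; module
        rw [decomp]
        have h1 : ‖(‖x‖⁻¹ : ℝ) • (x - x')‖ = ‖x - x'‖ / ‖x‖ := by
          rw [norm_smul, Real.norm_eq_abs, abs_of_nonneg (by positivity)]
          ring
        have h2 : ‖((‖x‖⁻¹ - ‖x'‖⁻¹ : ℝ)) • x'‖ ≤ ‖x - x'‖ / ‖x‖ := by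
          rw [norm_smul, Real.norm_eq_abs]
          have : |(‖x‖⁻¹ - ‖x'‖⁻¹ : ℝ)| = (‖x‖ - ‖x'‖) / (‖x‖ * ‖x'‖) := by
            rw [abs_of_nonpos (by
              have : ‖x‖⁻¹ ≤ ‖x'‖⁻¹ := inv_anti₀ hx'pos hle
              linarith)]
            field_simp
            ring
          rw [this]
          have hnn : ‖x‖ - ‖x'‖ ≤ ‖x - x'‖ := norm_sub_norm_le x x'
          rw [div_mul_eq_mul_div, mul_comm]
          rw [div_le_div_iff₀ (by positivity) hxpos]
          calc ‖x'‖ * (‖x‖ - ‖x'‖) * ‖x‖ ≤ ‖x'‖ * ‖x - x'‖ * ‖x‖ := by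
                apply mul_le_mul_of_nonneg_right _ (le_of_lt hxpos)
                exact mul_le_mul_of_nonneg_left hnn (le_of_lt hx'pos)
            _ = ‖x - x'‖ * (‖x‖ * ‖x'‖) := by ring
        calc ‖(‖x‖⁻¹:ℝ) • (x - x') + ((‖x‖⁻¹ - ‖x'‖⁻¹:ℝ)) • x'‖
            ≤ ‖(‖x‖⁻¹:ℝ) • (x - x')‖ + ‖((‖x‖⁻¹ - ‖x'‖⁻¹:ℝ)) • x'‖ := norm_add_le _ _
          _ ≤ ‖x - x'‖ / ‖x‖ + ‖x - x'‖ / ‖x‖ := by rw [h1]; linarith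
          _ = 2 * ‖x - x'‖ / ‖x‖ := by ring
      have hxbig : ε / 4 < ‖x‖ := lt_of_lt_of_le hbig hle
      have huu'δ : dist u u' < δ := by
        rw [dist_eq_norm]
        calc ‖u - u'‖ ≤ 2 * ‖x - x'‖ / ‖x‖ := huu'
          _ < δ := (div_lt_iff₀ hxpos).mpr (by nlinarith)
      have hΦd : dist (Φ u) (Φ u') < ε / 2 := hδΦ u hun u' hu'n huu'δ
      rw [dist_eq_norm] at hΦd
      have decomp2 : ‖x‖ • Φ u - ‖x'‖ • Φ u' =
          (‖x‖ - ‖x'‖) • Φ u + ‖x'‖ • (Φ u - Φ u') := by module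
      calc ‖‖x‖ • Φ u - ‖x'‖ • Φ u'‖
          ≤ ‖(‖x‖ - ‖x'‖ : ℝ) • Φ u‖ + ‖(‖x'‖:ℝ) • (Φ u - Φ u')‖ := by
            rw [decomp2]; exact norm_add_le _ _
        _ = |‖x‖ - ‖x'‖| + ‖x'‖ * ‖Φ u - Φ u'‖ := by
            rw [norm_smul, norm_smul, hn u hun, Real.norm_eq_abs, Real.norm_eq_abs,
              abs_of_nonneg (norm_nonneg x'), mul_one]
        _ ≤ ‖x - x'‖ + 1 * ‖Φ u - Φ u'‖ := by
            have h1 := abs_norm_sub_norm_le x x'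
            have h2 : ‖x'‖ ≤ 1 := hx'
            have := mul_le_mul_of_nonneg_right h2 (norm_nonneg (Φ u - Φ u'))
            linarith
        _ < ε / 2 + 1 * (ε / 2) := by
            have := hd1; nlinarith [norm_nonneg (Φ u - Φ u')]
        _ = ε := by ring
  intro x hx x' hx' hd
  rcases le_total ‖x'‖ ‖x‖ with h | h
  · exact key x hx x' hx' h hd
  · rw [dist_comm] at hd ⊢
    exact key x' hx' x hx h hd



/-- If `Φ : S(X) → S(Y)` is a uniform homeomorphism of unit spheres of Banach
spaces (with inverse `Φ'`), then `Ψ(x) = ‖x‖·Φ(x/‖x‖)`, `Ψ(0) = 0`, is a uniform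
homeomorphism of the closed unit balls (with inverse `Ψ'` of the same form). -/
theorem sphere_homeo_extends_to_ball {X Y : Type*}
    [NormedAddCommGroup X] [NormedSpace ℝ X] [CompleteSpace X]
    [NormedAddCommGroup Y] [NormedSpace ℝ Y] [CompleteSpace Y]
    (Φ : X → Y) (Φ' : Y → X)
    (hbij : Set.BijOn Φ {x | ‖x‖ = 1} {y | ‖y‖ = 1})
    (hΦuc : UniformContinuousOn Φ {x | ‖x‖ = 1})
    (hinv : ∀ x : X, ‖x‖ = 1 → Φ' (Φ x) = x)
    (hinv' : ∀ y : Y, ‖y‖ = 1 → Φ (Φ' y) = y)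
    (hΦ'uc : UniformContinuousOn Φ' {y | ‖y‖ = 1}) :
    let Ψ : X → Y := fun x => ‖x‖ • Φ (‖x‖⁻¹ • x)
    let Ψ' : Y → X := fun y => ‖y‖ • Φ' (‖y‖⁻¹ • y)
    Set.BijOn Ψ {x | ‖x‖ ≤ 1} {y | ‖y‖ ≤ 1} ∧
    UniformContinuousOn Ψ {x | ‖x‖ ≤ 1} ∧
    (∀ x : X, ‖x‖ ≤ 1 → Ψ' (Ψ x) = x) ∧
    UniformContinuousOn Ψ' {y | ‖y‖ ≤ 1} := by
  intro Ψ Ψ'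
  have hΦn : ∀ x : X, ‖x‖ = 1 → ‖Φ x‖ = 1 := fun x hx => hbij.mapsTo hx
  have hΦ'n : ∀ y : Y, ‖y‖ = 1 → ‖Φ' y‖ = 1 := by
    intro y hy
    obtain ⟨x, hx, rfl⟩ := hbij.surjOn hy
    rw [hinv x hx]; exact hx
  -- norm preservation
  have hΨn : ∀ x : X, ‖Ψ x‖ = ‖x‖ := fun x => sphere_ext_norm_eq Φ hΦn x
  have hΨ'n : ∀ y : Y, ‖Ψ' y‖ = ‖y‖ := fun y => sphere_ext_norm_eq Φ' hΦ'n y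
  -- left inverse (everywhere on ball, in fact everywhere)
  have leftinv : ∀ (F : X → Y) (F' : Y → X),
      (∀ x : X, ‖x‖ = 1 → ‖F x‖ = 1) →
      (∀ x : X, ‖x‖ = 1 → F' (F x) = x) →
      ∀ x : X, ‖(‖x‖ • F' (‖(‖x‖ • F (‖x‖⁻¹ • x) : Y)‖⁻¹ • (‖x‖ • F (‖x‖⁻¹ • x)) : Y) : X)‖ = ‖x‖ →
      True := fun _ _ _ _ _ _ => trivial
  have hΨ'Ψ : ∀ x : X, Ψ' (Ψ x) = x := by
    intro x
    rcases eq_or_ne x 0 with rfl | hx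
    · show ‖Ψ (0:X)‖ • Φ' _ = 0
      have h0 : Ψ (0:X) = 0 := by show ‖(0:X)‖ • _ = 0; simp
      rw [h0]; simp
    · have hxn : (0:ℝ) < ‖x‖ := norm_pos_iff.mpr hx
      have hun : ‖(‖x‖⁻¹ • x : X)‖ = 1 := unit_norm hx
      show ‖Ψ x‖ • Φ' (‖Ψ x‖⁻¹ • Ψ x) = x
      have hΨx : Ψ x = ‖x‖ • Φ (‖x‖⁻¹ • x) := rfl
      rw [hΨn x, hΨx, smul_smul, inv_mul_cancel₀ (ne_of_gt hxn), one_smul,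
        hinv _ hun, smul_smul, mul_inv_cancel₀ (ne_of_gt hxn), one_smul]
  have hΨΨ' : ∀ y : Y, Ψ (Ψ' y) = y := by
    intro y
    rcases eq_or_ne y 0 with rfl | hy
    · show ‖Ψ' (0:Y)‖ • Φ _ = 0
      have h0 : Ψ' (0:Y) = 0 := by show ‖(0:Y)‖ • _ = 0; simp
      rw [h0]; simp
    · have hyn : (0:ℝ) < ‖y‖ := norm_pos_iff.mpr hy
      have hun : ‖(‖y‖⁻¹ • y : Y)‖ = 1 := unit_norm hy
      show ‖Ψ' y‖ • Φ (‖Ψ' y‖⁻¹ • Ψ' y) = y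
      have hΨ'y : Ψ' y = ‖y‖ • Φ' (‖y‖⁻¹ • y) := rfl
      rw [hΨ'n y, hΨ'y, smul_smul, inv_mul_cancel₀ (ne_of_gt hyn), one_smul,
        hinv' _ hun, smul_smul, mul_inv_cancel₀ (ne_of_gt hyn), one_smul]
  refine ⟨⟨?_, ?_, ?_⟩, ?_, fun x _ => hΨ'Ψ x, ?_⟩
  · intro x hx
    show ‖Ψ x‖ ≤ 1
    rw [hΨn]; exact hx
  · intro x _ x' _ h
    have := congrArg Ψ' h
    rwa [hΨ'Ψ, hΨ'Ψ] at this
  · intro y hy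
    refine ⟨Ψ' y, ?_, hΨΨ' y⟩
    show ‖Ψ' y‖ ≤ 1
    rw [hΨ'n]; exact hy
  · exact sphere_ext_uc Φ hΦn hΦuc
  · exact sphere_ext_uc Φ' hΦ'n hΦ'uc
end
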